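/- arXiv:2201.07875 — 5 statements merged into one kernel-verified Lean document; each statement's English description precedes it below -/
import Mathlib

section
/- Let (Ω, μ) be a probability space, let (ν_m)_{m∈ℕ} be independent complex-valued random variables with E[ν_m] = 0 and E[|ν_m|²] = 1, and let (φ_m)_{m∈ℕ} be complex numbers with |φ_m| = 1. Let κ > 0, P > 0, σ² > 0, and let α₀ : ℕ → ℝ satisfy M·α₀(M)² → 1 as M → ∞. Define the instantaneous SNR isnr_M := (M·α₀(M)²/(1+κ)) · |√κ + (1/M)Σ_{m=0}^{M-1} ν_m conj(φ_m)|² · (P/σ²). Then isnr_M converges in measure (in probability) to (κ/(1+κ))·(P/σ²) as M → ∞. -/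
/-!
Write `S_M = M⁻¹ ∑_{m<M} ν_m conj(φ_m)`. The summands are pairwise independent with mean zero,
so the cross terms of `E‖∑ ν_m conj(φ_m)‖²` vanish and `E‖S_M‖² = 1/M`: `S_M → 0` in `L²`, hence
in probability. The SNR is `M α₀(M)²/(1+κ) · F(S_M)` for the continuous `F z = ‖√κ + z‖² P/σ²`,
and `M α₀(M)² → 1`; along a subsequence on which `S_M → 0` almost surely this converges to
`F 0 / (1+κ) = κ/(1+κ) · P/σ²`, which characterises convergence in probability.
-/

open MeasureTheory ProbabilityTheory Finset Filter Topology
open scoped InnerProductSpace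

section

variable {Ω E : Type*} [MeasurableSpace Ω] {μ : Measure Ω} [NormedAddCommGroup E]

theorem tendstoInMeasure_zero_of_tendsto_integral_norm_sq {ι : Type*} {l : Filter ι}
    {f : ι → Ω → E} (hf : ∀ i, MemLp (f i) 2 μ)
    (h : Tendsto (fun i ↦ ∫ ω, ‖f i ω‖ ^ 2 ∂μ) l (𝓝 0)) : TendstoInMeasure μ f l 0 := by
  have heLpNorm : ∀ i, eLpNorm (f i) 2 μ = ENNReal.ofReal √(∫ ω, ‖f i ω‖ ^ 2 ∂μ) := by
    intro i
    rw [(hf i).eLpNorm_eq_integral_rpow_norm two_ne_zero ENNReal.ofNat_ne_top,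
      Real.sqrt_eq_rpow]
    norm_num
  refine tendstoInMeasure_of_tendsto_eLpNorm two_ne_zero (fun i ↦ (hf i).1)
    aestronglyMeasurable_zero ?_
  simp_rw [sub_zero, heLpNorm]
  simpa using ENNReal.tendsto_ofReal h.sqrt

variable [InnerProductSpace ℝ E]

theorem MeasureTheory.MemLp.integrable_inner {X Y : Ω → E} (hX : MemLp X 2 μ)
    (hY : MemLp Y 2 μ) : Integrable (fun ω ↦ ⟪X ω, Y ω⟫_ℝ) μ :=
  (hX.norm.integrable_mul hY.norm).mono (hX.1.inner hY.1) <|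
    .of_forall fun ω ↦ by simpa using abs_real_inner_le_norm (X ω) (Y ω)

variable [CompleteSpace E] [MeasurableSpace E] [BorelSpace E] [IsFiniteMeasure μ]

theorem integral_norm_sum_sq_of_pairwise_indepFun {ι : Type*} {X : ι → Ω → E} {s : Finset ι}
    (hX : ∀ i ∈ s, MemLp (X i) 2 μ) (hmean : ∀ i ∈ s, μ[X i] = 0)
    (hindep : Set.Pairwise ↑s fun i j ↦ X i ⟂ᵢ[μ] X j) :
    ∫ ω, ‖∑ i ∈ s, X i ω‖ ^ 2 ∂μ = ∑ i ∈ s, ∫ ω, ‖X i ω‖ ^ 2 ∂μ := by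
  have hcross : ∀ i ∈ s, ∀ j ∈ s, i ≠ j → ∫ ω, ⟪X i ω, X j ω⟫_ℝ ∂μ = 0 := fun i hi j hj hij ↦ by
    have := (hindep hi hj hij).integral_bilin ((hX i hi).integrable one_le_two)
      ((hX j hj).integrable one_le_two) (innerSL ℝ)
    rwa [hmean i hi, map_zero, zero_apply] at this
  calc ∫ ω, ‖∑ i ∈ s, X i ω‖ ^ 2 ∂μ = ∫ ω, ∑ i ∈ s, ∑ j ∈ s, ⟪X i ω, X j ω⟫_ℝ ∂μ := by
        simp_rw [← real_inner_self_eq_norm_sq, sum_inner, inner_sum]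
    _ = ∑ i ∈ s, ∑ j ∈ s, ∫ ω, ⟪X i ω, X j ω⟫_ℝ ∂μ := by
        rw [integral_finsetSum _ fun i hi ↦ integrable_finsetSum _ fun j hj ↦
          (hX i hi).integrable_inner (hX j hj)]
        exact sum_congr rfl fun i hi ↦ integral_finsetSum _ fun j hj ↦
          (hX i hi).integrable_inner (hX j hj)
    _ = ∑ i ∈ s, ∫ ω, ‖X i ω‖ ^ 2 ∂μ := by
        refine sum_congr rfl fun i hi ↦ ?_
        rw [sum_eq_single_of_mem i hi fun j hj hji ↦ hcross i hi j hj hji.symm]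
        simp_rw [real_inner_self_eq_norm_sq]

theorem tendstoInMeasure_smul_sum_of_pairwise_indepFun {X : ℕ → Ω → E}
    (hX : ∀ i, MemLp (X i) 2 μ) (hmean : ∀ i, μ[X i] = 0)
    (hindep : Pairwise fun i j ↦ X i ⟂ᵢ[μ] X j) {C : ℝ} (hC : ∀ i, ∫ ω, ‖X i ω‖ ^ 2 ∂μ ≤ C) :
    TendstoInMeasure μ (fun (n : ℕ) ω ↦ (n : ℝ)⁻¹ • ∑ i ∈ range n, X i ω) atTop 0 := by
  have hmoment : ∀ n : ℕ, ∫ ω, ‖(n : ℝ)⁻¹ • ∑ i ∈ range n, X i ω‖ ^ 2 ∂μ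
      = (n : ℝ)⁻¹ ^ 2 * ∑ i ∈ range n, ∫ ω, ‖X i ω‖ ^ 2 ∂μ := fun n ↦ by
    simp_rw [norm_smul, mul_pow, integral_const_mul, norm_inv, RCLike.norm_natCast]
    rw [integral_norm_sum_sq_of_pairwise_indepFun (fun i _ ↦ hX i) (fun i _ ↦ hmean i)
      (hindep.set_pairwise _)]
  have hbound : ∀ n : ℕ, (n : ℝ)⁻¹ ^ 2 * ∑ i ∈ range n, ∫ ω, ‖X i ω‖ ^ 2 ∂μ ≤ C * (n : ℝ)⁻¹ :=
    fun n ↦ calc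
      _ ≤ (n : ℝ)⁻¹ ^ 2 * (n * C) := by
        gcongr
        simpa using sum_le_sum fun i (_ : i ∈ range n) ↦ hC i
      _ = C * (n : ℝ)⁻¹ := by
        rcases n.eq_zero_or_pos with rfl | hn
        · simp
        · field_simp
  refine tendstoInMeasure_zero_of_tendsto_integral_norm_sq
    (fun n ↦ (memLp_finsetSum _ fun i _ ↦ hX i).const_smul _) ?_
  refine squeeze_zero (fun n ↦ by positivity) (fun n ↦ (hmoment n).trans_le (hbound n)) ?_
  simpa using tendsto_inv_atTop_nhds_zero_nat.const_mul C

end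

theorem MeasureTheory.TendstoInMeasure.comp_tendsto_uncurry {Ω E F : Type*}
    [MeasurableSpace Ω] {μ : Measure Ω} [IsFiniteMeasure μ]
    [PseudoEMetricSpace E] [PseudoEMetricSpace F]
    {f : ℕ → Ω → E} {g : Ω → E} (hfg : TendstoInMeasure μ f atTop g)
    {H : ℕ → E → F} {K : E → F}
    (hH : ∀ x, Tendsto (Function.uncurry H) (atTop ×ˢ 𝓝 x) (𝓝 (K x)))
    (hmeas : ∀ n, AEStronglyMeasurable (fun ω ↦ H n (f n ω)) μ) :
    TendstoInMeasure μ (fun n ω ↦ H n (f n ω)) atTop (fun ω ↦ K (g ω)) := by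
  rw [exists_seq_tendstoInMeasure_atTop_iff hmeas]
  intro ns hns
  obtain ⟨ns', hns', hae⟩ := (hfg.comp hns.tendsto_atTop).exists_seq_tendsto_ae
  refine ⟨ns', hns', ?_⟩
  filter_upwards [hae] with ω hω
  exact (hH (g ω)).comp (((hns.comp hns').tendsto_atTop).prodMk hω)

theorem isnr_tendsto_in_measure_general
    {Ω : Type*} [MeasurableSpace Ω] (μ : Measure Ω) [IsProbabilityMeasure μ]
    (ν : ℕ → Ω → ℂ) (φ : ℕ → ℂ)
    (hindep : iIndepFun ν μ)
    (hL2 : ∀ m, MemLp (ν m) 2 μ)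
    (hmean : ∀ m, ∫ ω, ν m ω ∂μ = 0)
    (hvar : ∀ m, ∫ ω, ‖ν m ω‖ ^ 2 ∂μ = 1)
    (hφ : ∀ m, ‖φ m‖ = 1)
    (κ P σ2 : ℝ) (hκ : 0 < κ)
    (α₀ : ℕ → ℝ)
    (hα₀ : Tendsto (fun M : ℕ => (M : ℝ) * (α₀ M) ^ 2) atTop (nhds 1))
    (isnr : ℕ → Ω → ℝ)
    (hisnr : ∀ M ω, isnr M ω =
      ((M : ℝ) * (α₀ M) ^ 2 / (1 + κ)) *
        ‖(Real.sqrt κ : ℂ) +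
          (M : ℂ)⁻¹ * ∑ m ∈ Finset.range M, ν m ω * (starRingEnd ℂ) (φ m)‖ ^ 2 *
        (P / σ2)) :
    TendstoInMeasure μ isnr atTop (fun _ => (κ / (1 + κ)) * (P / σ2)) := by
  set X : ℕ → Ω → ℂ := fun m ω ↦ ν m ω * starRingEnd ℂ (φ m)
  have hXL2 : ∀ m, MemLp (X m) 2 μ := fun m ↦ (hL2 m).mul_const _
  have hS := tendstoInMeasure_smul_sum_of_pairwise_indepFun hXL2
    (fun m ↦ by simp [X, integral_mul_const, hmean])
    (fun i j hij ↦ (hindep.indepFun hij).comp (measurable_mul_const _) (measurable_mul_const _))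
    (C := 1) (fun m ↦ by simp [X, hφ, hvar])
  set F : ℂ → ℝ := fun z ↦ ‖(√κ : ℂ) + z‖ ^ 2 * (P / σ2)
  have hF : Continuous F := by fun_prop
  have hlim := hS.comp_tendsto_uncurry
    (H := fun M z ↦ (M : ℝ) * α₀ M ^ 2 / (1 + κ) * F z) (K := fun z ↦ 1 / (1 + κ) * F z)
    (fun z ↦ ((hα₀.comp tendsto_fst).div_const _).mul (hF.tendsto z |>.comp tendsto_snd))
    (fun M ↦ (hF.comp_aestronglyMeasurable
      ((memLp_finsetSum _ fun i _ ↦ hXL2 i).1.const_smul _)).const_mul _)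
  convert hlim using 1
  · ext M ω
    rw [hisnr, Complex.real_smul, Complex.ofReal_inv, Complex.ofReal_natCast, mul_assoc]
  · ext ω
    simp only [F, Pi.zero_apply, add_zero, Complex.norm_real, Real.norm_eq_abs, sq_abs,
      Real.sq_sqrt hκ.le]
    ring

/-- Theorem 1 of the paper: in the stationary Rician channel with constant
path-loss `α₀(M)` satisfying the free-space normalization `M·α₀(M)² → 1`,
the instantaneous SNR of LoS-based beamforming converges in probability to
`(κ/(1+κ))·(P/σ²)` as the number of antennas `M → ∞`. -/
theorem isnr_tendsto_in_measure
    {Ω : Type*} [MeasurableSpace Ω] (μ : Measure Ω) [IsProbabilityMeasure μ]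
    (ν : ℕ → Ω → ℂ) (φ : ℕ → ℂ)
    (hmeas : ∀ m, Measurable (ν m))
    (hindep : iIndepFun ν μ)
    (hL2 : ∀ m, MemLp (ν m) 2 μ)
    (hmean : ∀ m, ∫ ω, ν m ω ∂μ = 0)
    (hvar : ∀ m, ∫ ω, ‖ν m ω‖ ^ 2 ∂μ = 1)
    (hφ : ∀ m, ‖φ m‖ = 1)
    (κ P σ2 : ℝ) (hκ : 0 < κ) (hP : 0 < P) (hσ2 : 0 < σ2)
    (α₀ : ℕ → ℝ)
    (hα₀ : Tendsto (fun M : ℕ => (M : ℝ) * (α₀ M) ^ 2) atTop (nhds 1))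
    (isnr : ℕ → Ω → ℝ)
    (hisnr : ∀ M ω, isnr M ω =
      ((M : ℝ) * (α₀ M) ^ 2 / (1 + κ)) *
        ‖(Real.sqrt κ : ℂ) +
          (M : ℂ)⁻¹ * ∑ m ∈ Finset.range M, ν m ω * (starRingEnd ℂ) (φ m)‖ ^ 2 *
        (P / σ2)) :
    TendstoInMeasure μ isnr atTop (fun _ => (κ / (1 + κ)) * (P / σ2)) :=
  isnr_tendsto_in_measure_general μ ν φ hindep hL2 hmean hvar hφ κ P σ2 hκ α₀ hα₀ isnr hisnr
end

section
/- Fix η > 0 and q > 0 and define G(L) := (Σ_{l=0}^{L-1} (1 + l²η)^{−q/2}) / √L for integers L ≥ 1. Then G(2) > G(1) if and only if η < (√2 + 1)^{2/q} − 1. Equivalently, G(2) ≤ G(1) if and only if η ≥ (√2 + 1)^{2/q} − 1. -/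
open Finset

/-- The computational core of Theorem 2 of the paper: for the normalized LoS
beamforming-gain function `G(L) = (Σ_{l<L} (1+l²η)^{-q/2})/√L`, one has
`G(2) > G(1)` iff `η < (√2+1)^{2/q} - 1`, and `G(2) ≤ G(1)` iff
`η ≥ (√2+1)^{2/q} - 1`. -/
theorem G_two_gt_one_iff (η q : ℝ) (hη : 0 < η) (hq : 0 < q)
    (G : ℕ → ℝ)
    (hG : ∀ L : ℕ, G L =
      (∑ l ∈ Finset.range L, (1 + (l : ℝ) ^ 2 * η) ^ (-(q / 2))) / Real.sqrt L) :
    (G 1 < G 2 ↔ η < (Real.sqrt 2 + 1) ^ (2 / q) - 1) ∧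
    (G 2 ≤ G 1 ↔ (Real.sqrt 2 + 1) ^ (2 / q) - 1 ≤ η) := by
  have hs2 : Real.sqrt 2 ^ 2 = 2 := Real.sq_sqrt (by norm_num)
  have hs2pos : (0:ℝ) < Real.sqrt 2 := Real.sqrt_pos.mpr (by norm_num)
  have h1η : (0:ℝ) < 1 + η := by linarith
  have hA : (0:ℝ) < Real.sqrt 2 + 1 := by linarith
  have hG1 : G 1 = 1 := by
    rw [hG 1]; simp
  have hG2 : G 2 = (1 + (1 + η) ^ (-(q/2))) / Real.sqrt 2 := by
    rw [hG 2]
    rw [Finset.sum_range_succ, Finset.sum_range_one]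
    norm_num
  -- key equivalence
  have key : G 1 < G 2 ↔ η < (Real.sqrt 2 + 1) ^ (2 / q) - 1 := by
    rw [hG1, hG2, lt_div_iff₀ hs2pos, one_mul]
    have h1 : Real.sqrt 2 < 1 + (1 + η) ^ (-(q/2)) ↔
        (Real.sqrt 2 + 1)⁻¹ < (1 + η) ^ (-(q/2)) := by
      have hinv : (Real.sqrt 2 + 1)⁻¹ = Real.sqrt 2 - 1 :=
        inv_eq_of_mul_eq_one_left (by nlinarith)
      rw [hinv]; constructor <;> intro <;> linarith
    rw [h1]
    have h2 : (1 + η) ^ (-(q/2)) = ((1 + η) ^ (q/2))⁻¹ := by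
      rw [Real.rpow_neg h1η.le]
    rw [h2, inv_lt_inv₀ hA (Real.rpow_pos_of_pos h1η _)]
    have h3 : (Real.sqrt 2 + 1) = ((Real.sqrt 2 + 1) ^ (2/q)) ^ (q/2) := by
      have he : 2 / q * (q / 2) = 1 := by field_simp
      rw [← Real.rpow_mul hA.le, he, Real.rpow_one]
    rw [h3, Real.rpow_lt_rpow_iff h1η.le (by positivity) (by positivity)]
    rw [← h3]
    constructor <;> intro <;> linarith
  constructor
  · exact key
  · rw [← not_lt, key, not_lt]
end

section
/- Fix q ≥ 1 and η with 0 < η < (√2 + 1)^{2/q} − 1, and define G(L) := (Σ_{l=0}^{L-1} (1 + l²η)^{−q/2}) / √L for integers L ≥ 1. Then there exists an integer L* ≥ 2 such that G(L) ≤ G(L*) for every integer L ≥ 1, and moreover G(L*) > G(1); in particular no maximizer of G equals 1. -/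
open Finset

private lemma tele_step (m : ℝ) (hm : 1 ≤ m) :
    1 / m ≤ 4 * (Real.sqrt (Real.sqrt m) - Real.sqrt (Real.sqrt (m - 1))) := by
  set a := Real.sqrt (Real.sqrt m) with ha
  set b := Real.sqrt (Real.sqrt (m - 1)) with hb
  have hm0 : (0:ℝ) ≤ m := by linarith
  have hm1 : (0:ℝ) ≤ m - 1 := by linarith
  have ha0 : 0 ≤ a := Real.sqrt_nonneg _
  have hb0 : 0 ≤ b := Real.sqrt_nonneg _
  have ha4 : a ^ 4 = m := by
    have h1 : a ^ 2 = Real.sqrt m := Real.sq_sqrt (Real.sqrt_nonneg m)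
    have h2 : (Real.sqrt m) ^ 2 = m := Real.sq_sqrt hm0
    nlinarith [h1, h2]
  have hb4 : b ^ 4 = m - 1 := by
    have h1 : b ^ 2 = Real.sqrt (m-1) := Real.sq_sqrt (Real.sqrt_nonneg _)
    have h2 : (Real.sqrt (m-1)) ^ 2 = m - 1 := Real.sq_sqrt hm1
    nlinarith [h1, h2]
  have hba : b ≤ a := by
    apply Real.sqrt_le_sqrt; apply Real.sqrt_le_sqrt; linarith
  have hsm : 1 ≤ Real.sqrt m := by
    rw [show (1:ℝ) = Real.sqrt 1 by simp]; exact Real.sqrt_le_sqrt hm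
  have ha1 : 1 ≤ a := by
    rw [ha, show (1:ℝ) = Real.sqrt 1 by simp]; exact Real.sqrt_le_sqrt hsm
  have ha3m : a ^ 3 ≤ m := by nlinarith [ha4, ha1, ha0]
  have hb3 : b^3 ≤ a^3 := pow_le_pow_left₀ hb0 hba 3
  have hb2 : b^2 ≤ a^2 := pow_le_pow_left₀ hb0 hba 2
  have h2b : a^2*b ≤ a^2*a := mul_le_mul_of_nonneg_left hba (by positivity)
  have h1b : a*b^2 ≤ a*a^2 := mul_le_mul_of_nonneg_left hb2 ha0
  have hstuff : a^3 + a^2*b + a*b^2 + b^3 ≤ 4*m := by nlinarith [ha3m]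
  have hfac : 1 = (a - b) * (a^3 + a^2*b + a*b^2 + b^3) := by
    have : (a - b) * (a^3 + a^2*b + a*b^2 + b^3) = a^4 - b^4 := by ring
    rw [this, ha4, hb4]; ring
  have key : 1 ≤ (a - b) * (4 * m) :=
    hfac.le.trans (mul_le_mul_of_nonneg_left hstuff (by linarith))
  rw [div_le_iff₀ (by linarith : (0:ℝ) < m)]
  nlinarith [key]

/-- Consequence of Theorem 2 of the paper: when `η` is below the threshold
`(√2+1)^{2/q} - 1` (user far from the ELAA) and the path-loss exponent is
`2q ≥ 2`, the normalized LoS beamforming gain `G` attains a maximum at some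
cluster size `L* ≥ 2` with `G(L*) > G(1)`; in particular no maximizer of `G`
over the positive integers equals `1`. -/
theorem G_max_exceeds_one (η q : ℝ) (hq : 1 ≤ q)
    (hη : 0 < η) (hη' : η < (Real.sqrt 2 + 1) ^ (2 / q) - 1)
    (G : ℕ → ℝ)
    (hG : ∀ L : ℕ, G L =
      (∑ l ∈ Finset.range L, (1 + (l : ℝ) ^ 2 * η) ^ (-(q / 2))) / Real.sqrt L) :
    (∃ Lstar : ℕ, 2 ≤ Lstar ∧ (∀ L : ℕ, 1 ≤ L → G L ≤ G Lstar) ∧ G 1 < G Lstar) ∧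
    (∀ L : ℕ, 1 ≤ L → (∀ L' : ℕ, 1 ≤ L' → G L' ≤ G L) → L ≠ 1) := by
  have hq0 : 0 < q := lt_of_lt_of_le one_pos hq
  have hsq2 : (1:ℝ) < Real.sqrt 2 := by
    have h : Real.sqrt 1 < Real.sqrt 2 := Real.sqrt_lt_sqrt (by norm_num) (by norm_num)
    simpa using h
  have hsq2' : Real.sqrt 2 * Real.sqrt 2 = 2 := Real.mul_self_sqrt (by norm_num)
  -- G 1 = 1
  have hG1 : G 1 = 1 := by
    rw [hG]
    simp [Real.one_rpow]
  -- G 2 > 1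
  have hG2 : 1 < G 2 := by
    have hpow : (1+η) ^ (q/2) < Real.sqrt 2 + 1 := by
      have h1 : 1 + η < (Real.sqrt 2 + 1) ^ (2/q) := by linarith
      calc (1+η) ^ (q/2) < ((Real.sqrt 2 + 1) ^ (2/q)) ^ (q/2) :=
            Real.rpow_lt_rpow (by positivity) h1 (by positivity)
        _ = Real.sqrt 2 + 1 := by
            rw [← Real.rpow_mul (by positivity)]
            rw [show (2/q) * (q/2) = 1 by field_simp]
            exact Real.rpow_one _
    have hppos : 0 < (1+η) ^ (q/2) := Real.rpow_pos_of_pos (by linarith) _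
    have ht : Real.sqrt 2 - 1 < (1+η) ^ (-(q/2)) := by
      rw [show -(q/2) = -(q/2) from rfl, Real.rpow_neg (by linarith)]
      have h1 : Real.sqrt 2 - 1 = (Real.sqrt 2 + 1)⁻¹ := by
        apply eq_inv_of_mul_eq_one_left
        nlinarith [hsq2']
      rw [h1]
      exact inv_strictAnti₀ hppos hpow
    have hcalc : G 2 = (1 + (1+η) ^ (-(q/2))) / Real.sqrt 2 := by
      rw [hG]
      rw [Finset.sum_range_succ, Finset.sum_range_one]
      norm_num
    rw [hcalc, lt_div_iff₀ (by positivity)]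
    linarith
  -- upper bound on the sum
  set c : ℝ := 4 / Real.sqrt η with hc
  have hse : 0 < Real.sqrt η := Real.sqrt_pos.2 hη
  have hc0 : 0 < c := by positivity
  have hterm : ∀ i : ℕ, (1 + ((i:ℝ)+1) ^ 2 * η) ^ (-(q / 2)) ≤
      c * (Real.sqrt (Real.sqrt ((i:ℝ)+1)) - Real.sqrt (Real.sqrt (i:ℝ))) := by
    intro i
    have hi1 : (1:ℝ) ≤ (i:ℝ)+1 := by have := Nat.cast_nonneg (α := ℝ) i; linarith
    have hb1 : (1:ℝ) ≤ 1 + ((i:ℝ)+1)^2*η := by nlinarith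
    -- (1+m²η)^(q/2) ≥ √(m²η) = m√η
    have h1 : ((i:ℝ)+1) * Real.sqrt η ≤ (1 + ((i:ℝ)+1)^2*η) ^ (q/2) := by
      have h2 : (1 + ((i:ℝ)+1)^2*η) ^ ((1:ℝ)/2) ≤ (1 + ((i:ℝ)+1)^2*η) ^ (q/2) :=
        Real.rpow_le_rpow_of_exponent_le hb1 (by linarith)
      have h3 : (1 + ((i:ℝ)+1)^2*η) ^ ((1:ℝ)/2) = Real.sqrt (1 + ((i:ℝ)+1)^2*η) :=
        (Real.sqrt_eq_rpow _).symm
      have h4 : ((i:ℝ)+1) * Real.sqrt η ≤ Real.sqrt (1 + ((i:ℝ)+1)^2*η) := by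
        have h5 : Real.sqrt (((i:ℝ)+1)^2*η) ≤ Real.sqrt (1 + ((i:ℝ)+1)^2*η) :=
          Real.sqrt_le_sqrt (by linarith)
        have h6 : Real.sqrt (((i:ℝ)+1)^2*η) = ((i:ℝ)+1) * Real.sqrt η := by
          rw [Real.sqrt_mul (by positivity), Real.sqrt_sq (by positivity)]
        linarith [h5, h6.symm.le]
      calc ((i:ℝ)+1) * Real.sqrt η ≤ Real.sqrt (1 + ((i:ℝ)+1)^2*η) := h4
        _ = (1 + ((i:ℝ)+1)^2*η) ^ ((1:ℝ)/2) := h3.symm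
        _ ≤ _ := h2
    have hpos : 0 < (1 + ((i:ℝ)+1)^2*η) ^ (q/2) := Real.rpow_pos_of_pos (by linarith) _
    have h7 : (1 + ((i:ℝ)+1) ^ 2 * η) ^ (-(q / 2)) ≤ 1 / (((i:ℝ)+1) * Real.sqrt η) := by
      rw [Real.rpow_neg (by linarith), inv_eq_one_div]
      apply one_div_le_one_div_of_le (by positivity) h1
    refine h7.trans ?_
    have htel := tele_step ((i:ℝ)+1) hi1
    have : (1:ℝ) / (((i:ℝ)+1) * Real.sqrt η) = (1/Real.sqrt η) * (1/((i:ℝ)+1)) := by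
      field_simp
    rw [this]
    have hres : (1/Real.sqrt η) * (1/((i:ℝ)+1)) ≤
        (1/Real.sqrt η) * (4 * (Real.sqrt (Real.sqrt ((i:ℝ)+1)) - Real.sqrt (Real.sqrt (((i:ℝ)+1) - 1)))) :=
      mul_le_mul_of_nonneg_left htel (by positivity)
    refine hres.trans_eq ?_
    rw [show ((i:ℝ)+1) - 1 = (i:ℝ) by ring, hc]
    ring
  have hsum : ∀ L : ℕ, 1 ≤ L →
      (∑ l ∈ Finset.range L, (1 + (l : ℝ) ^ 2 * η) ^ (-(q / 2))) ≤
      1 + c * Real.sqrt (Real.sqrt L) := by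
    intro L hL
    obtain ⟨n, rfl⟩ : ∃ n, L = n + 1 := ⟨L - 1, by omega⟩
    rw [Finset.sum_range_succ']
    have h0 : (1 + ((0:ℕ):ℝ) ^ 2 * η) ^ (-(q / 2)) = 1 := by
      norm_num
    rw [h0]
    push_cast
    have hstep : (∑ i ∈ Finset.range n, (1 + ((i:ℕ)+1 : ℝ) ^ 2 * η) ^ (-(q / 2))) ≤
        ∑ i ∈ Finset.range n, c * (Real.sqrt (Real.sqrt ((i:ℝ)+1)) - Real.sqrt (Real.sqrt (i:ℝ))) := by
      apply Finset.sum_le_sum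
      intro i _
      exact hterm i
    have htel : ∑ i ∈ Finset.range n, c * (Real.sqrt (Real.sqrt ((i:ℝ)+1)) - Real.sqrt (Real.sqrt (i:ℝ)))
        = c * (Real.sqrt (Real.sqrt (n:ℝ)) - Real.sqrt (Real.sqrt ((0:ℕ):ℝ))) := by
      rw [← Finset.mul_sum]
      congr 1
      have := Finset.sum_range_sub (fun i : ℕ => Real.sqrt (Real.sqrt (i:ℝ))) n
      simpa using this
    have hmon : Real.sqrt (Real.sqrt (n:ℝ)) ≤ Real.sqrt (Real.sqrt ((n:ℝ)+1)) := by
      apply Real.sqrt_le_sqrt; apply Real.sqrt_le_sqrt; linarith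
    calc (∑ i ∈ Finset.range n, (1 + ((i:ℕ)+1 : ℝ) ^ 2 * η) ^ (-(q / 2))) + 1
        ≤ c * (Real.sqrt (Real.sqrt (n:ℝ)) - Real.sqrt (Real.sqrt ((0:ℕ):ℝ))) + 1 := by
          have := hstep.trans htel.le
          linarith
      _ ≤ 1 + c * Real.sqrt (Real.sqrt ((n:ℝ)+1)) := by
          simp only [Nat.cast_zero, Real.sqrt_zero]
          nlinarith [mul_le_mul_of_nonneg_left hmon hc0.le]
  -- far-field bound: G L ≤ 1 for L large
  have hfar : ∀ L : ℕ, (c+1)^4 ≤ (L:ℝ) → G L ≤ 1 := by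
    intro L hL
    have hc14 : (1:ℝ) ≤ (c+1)^4 := one_le_pow₀ (by linarith)
    have hL1 : (1:ℝ) ≤ (L:ℝ) := le_trans hc14 hL
    have hLn : 1 ≤ L := by exact_mod_cast hL1
    set x := Real.sqrt (Real.sqrt (L:ℝ)) with hx
    have hx0 : 0 ≤ x := Real.sqrt_nonneg _
    have hxc : c + 1 ≤ x := by
      have h1 : Real.sqrt ((c+1)^4) ≤ Real.sqrt (L:ℝ) := Real.sqrt_le_sqrt hL
      have h2 : Real.sqrt ((c+1)^4) = (c+1)^2 := by
        rw [show ((c+1):ℝ)^4 = ((c+1)^2)^2 by ring]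
        exact Real.sqrt_sq (by positivity)
      have h3 : Real.sqrt ((c+1)^2) ≤ x := by
        apply Real.sqrt_le_sqrt; rw [← h2] at *; linarith [h1]
      have h4 : Real.sqrt ((c+1)^2) = c + 1 := Real.sqrt_sq (by positivity)
      linarith [h3, h4.symm.le]
    have hx2 : x^2 = Real.sqrt (L:ℝ) := Real.sq_sqrt (Real.sqrt_nonneg _)
    have hsL : 0 < Real.sqrt (L:ℝ) := Real.sqrt_pos.2 (by linarith)
    have hnum : (∑ l ∈ Finset.range L, (1 + (l : ℝ) ^ 2 * η) ^ (-(q / 2))) ≤ Real.sqrt (L:ℝ) := by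
      have h1 := hsum L hLn
      have h2 : 1 + c * x ≤ x^2 := by nlinarith [hxc, hc0, hx0]
      rw [← hx2]
      exact h1.trans (by rw [← hx]; exact h2)
    rw [hG, div_le_one hsL]
    exact hnum
  -- assemble
  set N : ℕ := max 2 ⌈((c:ℝ)+1)^4⌉₊ with hN
  have hN2 : 2 ≤ N := le_max_left _ _
  obtain ⟨Lstar, hLmem, hLmax⟩ :=
    Finset.exists_max_image (Finset.Icc 1 N) G ⟨2, Finset.mem_Icc.2 ⟨by norm_num, hN2⟩⟩
  have h2mem : 2 ∈ Finset.Icc 1 N := Finset.mem_Icc.2 ⟨by norm_num, hN2⟩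
  have hG2le : G 2 ≤ G Lstar := hLmax 2 h2mem
  have hGmax : ∀ L : ℕ, 1 ≤ L → G L ≤ G Lstar := by
    intro L hL
    by_cases hcase : L ≤ N
    · exact hLmax L (Finset.mem_Icc.2 ⟨hL, hcase⟩)
    · push_neg at hcase
      have hge : ((c:ℝ)+1)^4 ≤ (L:ℝ) := by
        have h1 : ⌈((c:ℝ)+1)^4⌉₊ ≤ N := le_max_right _ _
        have h2 : ⌈((c:ℝ)+1)^4⌉₊ ≤ L := by omega
        calc ((c:ℝ)+1)^4 ≤ (⌈((c:ℝ)+1)^4⌉₊ : ℝ) := Nat.le_ceil _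
          _ ≤ (L:ℝ) := by exact_mod_cast h2
      have := hfar L hge
      linarith [hG2le, hG2]
  have hLstar1 : 1 ≤ Lstar := (Finset.mem_Icc.1 hLmem).1
  have hG1lt : G 1 < G Lstar := by rw [hG1]; linarith
  have hLstar2 : 2 ≤ Lstar := by
    rcases Nat.lt_or_ge Lstar 2 with h | h
    · interval_cases Lstar
      · exact absurd hG1lt (by rw [hG1]; linarith)
    · exact h
  constructor
  · exact ⟨Lstar, hLstar2, hGmax, hG1lt⟩
  · intro L hL hmax hL1
    subst hL1
    have := hmax 2 (by norm_num)
    rw [hG1] at this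
    linarith
end

section
/- Let q = 1 and η > 2 + 2√2, and define G(L) := (Σ_{l=0}^{L-1} (1 + l²η)^{−1/2}) / √L for integers L ≥ 1. Then G is strictly decreasing: G(L+1) < G(L) for every integer L ≥ 1. Moreover, if η = 2 + 2√2 then G(L+1) ≤ G(L) for every L ≥ 1. -/
set_option maxHeartbeats 800000

open Finset

/-- The normalized LoS beamforming-gain function of eq. (13) of the paper in
the free-space case `q = 1`. -/
noncomputable def Gfree (η : ℝ) (L : ℕ) : ℝ :=
  (∑ l ∈ Finset.range L, (1 + (l : ℝ) ^ 2 * η) ^ (-((1 : ℝ) / 2))) / Real.sqrt L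

namespace GfreeAux

noncomputable def GA (η : ℝ) (l : ℕ) : ℝ := 1 / Real.sqrt (1 + (l : ℝ) ^ 2 * η)

noncomputable def GS (η : ℝ) (L : ℕ) : ℝ := ∑ l ∈ Finset.range L, GA η l

noncomputable def GC (L : ℕ) : ℝ := Real.sqrt ((L : ℝ) * ((L : ℝ) + 1)) + L

lemma GA_nonneg (η : ℝ) (l : ℕ) : 0 ≤ GA η l :=
  one_div_nonneg.2 (Real.sqrt_nonneg _)

lemma GS_succ (η : ℝ) (L : ℕ) : GS η (L + 1) = GS η L + GA η L := by
  simp [GS, Finset.sum_range_succ]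

lemma step (η : ℝ) (hη : 1 ≤ η) (L : ℕ) (hL : 1 ≤ L) :
    GA η (L + 1) * GC (L + 1) ≤ GA η L * (GC L + 1) := by
  have hn : (1 : ℝ) ≤ (L : ℝ) := by exact_mod_cast hL
  set n : ℝ := (L : ℝ) with hn'
  have hηn : (0:ℝ) ≤ n ^ 2 * η := mul_nonneg (sq_nonneg n) (by linarith)
  have hηn1 : (0:ℝ) ≤ (n + 1) ^ 2 * η := mul_nonneg (sq_nonneg _) (by linarith)
  have hu0 : (0 : ℝ) < 1 + n ^ 2 * η := by linarith
  have hv0 : (0 : ℝ) < 1 + (n + 1) ^ 2 * η := by linarith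
  set u := Real.sqrt (1 + n ^ 2 * η) with hu'
  set v := Real.sqrt (1 + (n + 1) ^ 2 * η) with hv'
  have hu : 0 < u := Real.sqrt_pos.2 hu0
  have hv : 0 < v := Real.sqrt_pos.2 hv0
  have hu2 : u ^ 2 = 1 + n ^ 2 * η := Real.sq_sqrt hu0.le
  have hv2 : v ^ 2 = 1 + (n + 1) ^ 2 * η := Real.sq_sqrt hv0.le
  set w := Real.sqrt ((n + 1) * (n + 2)) with hw'
  set s := Real.sqrt (n * (n + 1)) with hs'
  have hw0 : 0 ≤ w := Real.sqrt_nonneg _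
  have hs0 : 0 ≤ s := Real.sqrt_nonneg _
  have hw2 : w ^ 2 = (n + 1) * (n + 2) := Real.sq_sqrt (by nlinarith)
  have hs2 : s ^ 2 = n * (n + 1) := Real.sq_sqrt (by nlinarith)
  have hwle : w ≤ n + 3 / 2 := by
    have := Real.sqrt_le_sqrt (show (n + 1) * (n + 2) ≤ (n + 3 / 2) ^ 2 by nlinarith)
    rwa [Real.sqrt_sq (by linarith)] at this
  have hsge : n ≤ s := by
    have := Real.sqrt_le_sqrt (show n ^ 2 ≤ n * (n + 1) by nlinarith)
    rwa [Real.sqrt_sq (by linarith)] at this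
  have hGA1 : GA η (L + 1) = 1 / v := by
    rw [GA, hv', hn']
    norm_num
  have hGA0 : GA η L = 1 / u := by rw [GA, hu', hn']
  have hGC1 : GC (L + 1) = w + (n + 1) := by
    rw [GC, hw', hn']
    push_cast
    ring_nf
  have hGC0 : GC L = s + n := by rw [GC, hs', hn']
  rw [hGA1, hGA0, hGC1, hGC0, one_div, one_div, inv_mul_eq_div, inv_mul_eq_div,
    div_le_div_iff₀ hv hu]
  -- goal : (w + (n + 1)) * u ≤ (s + n + 1) * v
  have hX0 : 0 ≤ (w + (n + 1)) * u := by positivity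
  have hY0 : 0 ≤ (s + n + 1) * v := by positivity
  have hsq : ((w + (n + 1)) * u) ^ 2 ≤ ((s + n + 1) * v) ^ 2 := by
    have h1 : (w + (n + 1)) ^ 2 ≤ (n + 1) * (4 * n + 6) := by
      nlinarith [mul_le_mul_of_nonneg_left hwle (show (0:ℝ) ≤ n + 1 by linarith)]
    have h2 : (n + 1) * (4 * n + 1) ≤ (s + n + 1) ^ 2 := by
      nlinarith [mul_le_mul_of_nonneg_left hsge (show (0:ℝ) ≤ n + 1 by linarith)]
    have hq : (1:ℝ) * (3 * n ^ 2 + 6 * n + 1) ≤ η * (3 * n ^ 2 + 6 * n + 1) :=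
      mul_le_mul_of_nonneg_right hη (by nlinarith)
    have h5 : (5:ℝ) ≤ η * (3 * n ^ 2 + 6 * n + 1) := by nlinarith
    have h3 : (n + 1) * (4 * n + 6) * (1 + n ^ 2 * η) ≤
        (n + 1) * (4 * n + 1) * (1 + (n + 1) ^ 2 * η) := by
      nlinarith [mul_le_mul_of_nonneg_left h5 (show (0:ℝ) ≤ n + 1 by linarith)]
    calc ((w + (n + 1)) * u) ^ 2 = (w + (n + 1)) ^ 2 * (1 + n ^ 2 * η) := by
            rw [mul_pow, hu2]
      _ ≤ (n + 1) * (4 * n + 6) * (1 + n ^ 2 * η) :=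
            mul_le_mul_of_nonneg_right h1 hu0.le
      _ ≤ (n + 1) * (4 * n + 1) * (1 + (n + 1) ^ 2 * η) := h3
      _ ≤ (s + n + 1) ^ 2 * (1 + (n + 1) ^ 2 * η) :=
            mul_le_mul_of_nonneg_right h2 hv0.le
      _ = ((s + n + 1) * v) ^ 2 := by rw [mul_pow, hv2]
  calc (w + (n + 1)) * u = Real.sqrt (((w + (n + 1)) * u) ^ 2) :=
        (Real.sqrt_sq hX0).symm
    _ ≤ Real.sqrt (((s + n + 1) * v) ^ 2) := Real.sqrt_le_sqrt hsq
    _ = (s + n + 1) * v := Real.sqrt_sq hY0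

lemma defect_mono (η : ℝ) (hη : 1 ≤ η) :
    ∀ L : ℕ, 1 ≤ L → GS η 1 - GA η 1 * GC 1 ≤ GS η L - GA η L * GC L := by
  intro L hL
  induction L with
  | zero => omega
  | succ L ih =>
    rcases Nat.eq_zero_or_pos L with h | h
    · subst h; norm_num
    · have hIH := ih h
      have hstep := step η hη L h
      rw [mul_add, mul_one] at hstep
      rw [GS_succ η L]
      linarith

lemma GS_one (η : ℝ) : GS η 1 = 1 := by
  simp [GS, GA]

lemma GC_one : GC 1 = Real.sqrt 2 + 1 := by
  norm_num [GC]

lemma base_le (η : ℝ) (hη : 2 + 2 * Real.sqrt 2 ≤ η) : GA η 1 * GC 1 ≤ 1 := by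
  have h2 : Real.sqrt 2 ^ 2 = 2 := Real.sq_sqrt (by norm_num)
  have h20 : (0:ℝ) ≤ Real.sqrt 2 := Real.sqrt_nonneg 2
  have hkey : Real.sqrt 2 + 1 ≤ Real.sqrt (1 + η) := by
    have h1 : (Real.sqrt 2 + 1) ^ 2 ≤ 1 + η := by nlinarith
    have := Real.sqrt_le_sqrt h1
    rwa [Real.sqrt_sq (by linarith)] at this
  have hpos : 0 < Real.sqrt (1 + η) := Real.sqrt_pos.2 (by linarith)
  rw [GA, GC_one]
  rw [show (1:ℝ) + ((1:ℕ):ℝ) ^ 2 * η = 1 + η by push_cast; ring]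
  rw [one_div, inv_mul_eq_div, div_le_one hpos]
  exact hkey

lemma base_lt (η : ℝ) (hη : 2 + 2 * Real.sqrt 2 < η) : GA η 1 * GC 1 < 1 := by
  have h2 : Real.sqrt 2 ^ 2 = 2 := Real.sq_sqrt (by norm_num)
  have h20 : (0:ℝ) ≤ Real.sqrt 2 := Real.sqrt_nonneg 2
  have hkey : Real.sqrt 2 + 1 < Real.sqrt (1 + η) := by
    have h1 : (Real.sqrt 2 + 1) ^ 2 < 1 + η := by nlinarith
    have := Real.sqrt_lt_sqrt (by positivity) h1
    rwa [Real.sqrt_sq (by linarith)] at this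
  have hpos : 0 < Real.sqrt (1 + η) := Real.sqrt_pos.2 (by linarith)
  rw [GA, GC_one]
  rw [show (1:ℝ) + ((1:ℕ):ℝ) ^ 2 * η = 1 + η by push_cast; ring]
  rw [one_div, inv_mul_eq_div, div_lt_one hpos]
  exact hkey

lemma Gfree_eq (η : ℝ) (hη : 0 < η) (L : ℕ) : Gfree η L = GS η L / Real.sqrt L := by
  rw [Gfree, GS]
  congr 1
  refine Finset.sum_congr rfl fun l _ => ?_
  have hx : (0:ℝ) ≤ 1 + (l : ℝ) ^ 2 * η := by positivity
  rw [GA, Real.rpow_neg hx, ← Real.sqrt_eq_rpow, one_div]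

lemma final_le (η : ℝ) (hη : 0 < η) (L : ℕ) (hL : 1 ≤ L)
    (hKEY : GA η L * GC L ≤ GS η L) : Gfree η (L + 1) ≤ Gfree η L := by
  have hn : (1 : ℝ) ≤ (L : ℝ) := by exact_mod_cast hL
  have ha0 : 0 ≤ GA η L := GA_nonneg η L
  rw [Gfree_eq η hη, Gfree_eq η hη]
  set n : ℝ := (L : ℝ) with hn'
  set p := Real.sqrt n with hp'
  set r := Real.sqrt (n + 1) with hr'
  have hp : 0 < p := Real.sqrt_pos.2 (by linarith)
  have hr : 0 < r := Real.sqrt_pos.2 (by linarith)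
  have hp2 : p ^ 2 = n := Real.sq_sqrt (by linarith)
  have hr2 : r ^ 2 = n + 1 := Real.sq_sqrt (by linarith)
  have hcast : Real.sqrt (((L + 1 : ℕ) : ℝ)) = r := by
    rw [show ((L + 1 : ℕ) : ℝ) = n + 1 by push_cast; ring, hr']
  rw [GS_succ η L, hcast]
  set S := GS η L
  set a := GA η L
  have hGCL : GC L = p * r + p ^ 2 := by
    rw [GC, ← hn', hp2, Real.sqrt_mul (by linarith : (0:ℝ) ≤ n), ← hp', ← hr']
  rw [hGCL] at hKEY
  rw [div_le_div_iff₀ hr hp]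
  have hid : S * r * (r + p) - (S + a) * p * (r + p) = S - a * (p * r + p ^ 2) := by
    have h : r ^ 2 = p ^ 2 + 1 := by rw [hp2, hr2]
    linear_combination S * h
  have h2 : (S + a) * p * (r + p) ≤ S * r * (r + p) := by linarith
  exact le_of_mul_le_mul_right h2 (by linarith)

lemma final_lt (η : ℝ) (hη : 0 < η) (L : ℕ) (hL : 1 ≤ L)
    (hKEY : GA η L * GC L < GS η L) : Gfree η (L + 1) < Gfree η L := by
  have hn : (1 : ℝ) ≤ (L : ℝ) := by exact_mod_cast hL
  have ha0 : 0 ≤ GA η L := GA_nonneg η L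
  rw [Gfree_eq η hη, Gfree_eq η hη]
  set n : ℝ := (L : ℝ) with hn'
  set p := Real.sqrt n with hp'
  set r := Real.sqrt (n + 1) with hr'
  have hp : 0 < p := Real.sqrt_pos.2 (by linarith)
  have hr : 0 < r := Real.sqrt_pos.2 (by linarith)
  have hp2 : p ^ 2 = n := Real.sq_sqrt (by linarith)
  have hr2 : r ^ 2 = n + 1 := Real.sq_sqrt (by linarith)
  have hcast : Real.sqrt (((L + 1 : ℕ) : ℝ)) = r := by
    rw [show ((L + 1 : ℕ) : ℝ) = n + 1 by push_cast; ring, hr']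
  rw [GS_succ η L, hcast]
  set S := GS η L
  set a := GA η L
  have hGCL : GC L = p * r + p ^ 2 := by
    rw [GC, ← hn', hp2, Real.sqrt_mul (by linarith : (0:ℝ) ≤ n), ← hp', ← hr']
  rw [hGCL] at hKEY
  rw [div_lt_div_iff₀ hr hp]
  have hid : S * r * (r + p) - (S + a) * p * (r + p) = S - a * (p * r + p ^ 2) := by
    have h : r ^ 2 = p ^ 2 + 1 := by rw [hp2, hr2]
    linear_combination S * h
  have h2 : (S + a) * p * (r + p) < S * r * (r + p) := by linarith
  exact lt_of_mul_lt_mul_right h2 (by linarith)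

lemma eta_big (η : ℝ) (hη : 2 + 2 * Real.sqrt 2 ≤ η) : 1 ≤ η := by
  have := Real.sqrt_nonneg 2
  linarith

end GfreeAux

open GfreeAux

/-- The monotone-decreasing half of Theorem 2 of the paper for `q = 1`
(path-loss exponent `2q = 2`): when `η > 2 + 2√2`, the function `G` is
strictly decreasing in the cluster size `L`; and when `η = 2 + 2√2`, it is
(weakly) decreasing. -/
theorem Gfree_strictly_decreasing_above_threshold :
    (∀ η : ℝ, 2 + 2 * Real.sqrt 2 < η →
      ∀ L : ℕ, 1 ≤ L → Gfree η (L + 1) < Gfree η L) ∧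
    (∀ L : ℕ, 1 ≤ L →
      Gfree (2 + 2 * Real.sqrt 2) (L + 1) ≤ Gfree (2 + 2 * Real.sqrt 2) L) := by
  constructor
  · intro η hη L hL
    have hη1 : 1 ≤ η := eta_big η hη.le
    have hη0 : 0 < η := by linarith
    have hd := defect_mono η hη1 L hL
    rw [GS_one] at hd
    have hb := base_lt η hη
    exact final_lt η hη0 L hL (by linarith)
  · intro L hL
    set η := 2 + 2 * Real.sqrt 2 with hη'
    have hη1 : 1 ≤ η := eta_big η le_rfl
    have hη0 : 0 < η := by linarith
    have hd := defect_mono η hη1 L hL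
    rw [GS_one] at hd
    have hb := base_le η le_rfl
    exact final_le η hη0 L hL (by linarith)
end

section
/- Let L ≥ 1 and M_AP ≥ 1 be integers, M = L·M_AP, η > 0, q > 0, α_⊥ > 0, κ > 0. For m = 0, …, M−1 set α_m := α_⊥ · (1 + ⌊m/M_AP⌋²η)^{−q/2}, and let φ_0, …, φ_{M−1} be complex numbers with |φ_m| = 1. Let (ν_m)_{m=0}^{M-1} be independent complex-valued random variables on a probability space with E[ν_m] = 0 and E[|ν_m|²] = 1. Define the instantaneous beamforming gain β̄ := (1/M) · |√(κ/(1+κ))·Σ_{m<M} α_m + √(1/(1+κ))·Σ_{m<M} α_m ν_m conj(φ_m)|². Then E[β̄] = (α_⊥²/(1+κ)) · ( κ·M_AP·G(L)² + Γ(L) ), where G(L) := (Σ_{l=0}^{L-1}(1+l²η)^{−q/2})/√L and Γ(L) := (1/L)·Σ_{l=0}^{L-1}(1+l²η)^{−q}. -/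
open MeasureTheory ProbabilityTheory Finset ComplexConjugate

/-!
The scattered part `Σ α_m ν_m conj φ_m` of the received amplitude is a sum of independent centred
terms, so it is orthogonal in `L²` to the deterministic LoS part and its summands are orthogonal
to each other. Pythagoras then gives the mean gain as LoS power plus scattered power,
`(κ (Σ α_m)² + Σ α_m²) / (1 + κ)`, and since `α_m` depends only on the AP index `⌊m / M_AP⌋`,
each sum over the `L · M_AP` antennas is `M_AP` times a sum over the `L` APs.
-/

theorem Finset.sum_range_mul_div {M : Type*} [AddCommMonoid M] (g : ℕ → M) (L n : ℕ) :
    ∑ m ∈ range (L * n), g (m / n) = n • ∑ l ∈ range L, g l := by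
  rcases n.eq_zero_or_pos with rfl | hn
  · simp
  induction L with
  | zero => simp
  | succ L ih =>
    have hblock : ∀ k ∈ range n, g ((L * n + k) / n) = g L := fun k hk => by
      rw [Nat.add_comm, Nat.add_mul_div_right _ _ hn, Nat.div_eq_of_lt (mem_range.mp hk), zero_add]
    rw [Nat.succ_mul, sum_range_add, ih, sum_congr rfl hblock, sum_const, card_range,
      sum_range_succ, smul_add]

section
variable {Ω 𝕜 : Type*} [RCLike 𝕜] [MeasurableSpace Ω] {μ : Measure Ω}

theorem integral_norm_add_sq_of_integral_conj_mul_eq_zero {X Y : Ω → 𝕜}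
    (hX : MemLp X 2 μ) (hY : MemLp Y 2 μ) (horth : ∫ ω, conj (X ω) * Y ω ∂μ = 0) :
    ∫ ω, ‖X ω + Y ω‖ ^ 2 ∂μ = ∫ ω, ‖X ω‖ ^ 2 ∂μ + ∫ ω, ‖Y ω‖ ^ 2 ∂μ := by
  have hXY : Integrable (fun ω => conj (X ω) * Y ω) μ := hX.star.integrable_mul hY
  have hcross : ∫ ω, RCLike.re (conj (X ω) * Y ω) ∂μ = 0 := by
    rw [integral_re hXY, horth, map_zero]
  have hX2 : Integrable (fun ω => ‖X ω‖ ^ 2) μ := hX.integrable_norm_pow two_ne_zero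
  have hY2 : Integrable (fun ω => ‖Y ω‖ ^ 2) μ := hY.integrable_norm_pow two_ne_zero
  have hre : Integrable (fun ω => 2 * RCLike.re (conj (X ω) * Y ω)) μ :=
    (RCLike.reCLM.integrable_comp hXY).const_mul 2
  have hX2re : Integrable (fun ω => ‖X ω‖ ^ 2 + 2 * RCLike.re (conj (X ω) * Y ω)) μ :=
    hX2.add hre
  simp_rw [norm_add_sq (𝕜 := 𝕜), RCLike.inner_apply']
  rw [integral_add hX2re hY2, integral_add hX2 hre, integral_const_mul, hcross, mul_zero,
    add_zero]

theorem integral_norm_sum_sq_of_pairwise {ι : Type*} {X : ι → Ω → 𝕜}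
    (hX : ∀ i, MemLp (X i) 2 μ)
    (horth : Pairwise fun i j => ∫ ω, conj (X i ω) * X j ω ∂μ = 0) (s : Finset ι) :
    ∫ ω, ‖∑ i ∈ s, X i ω‖ ^ 2 ∂μ = ∑ i ∈ s, ∫ ω, ‖X i ω‖ ^ 2 ∂μ := by
  classical
  induction s using Finset.induction_on with
  | empty => simp
  | insert i s hi ih =>
    have hcross : ∀ j, Integrable (fun ω => conj (X i ω) * X j ω) μ := fun j =>
      (hX i).star.integrable_mul (hX j)
    have hrest : ∫ ω, conj (X i ω) * ∑ j ∈ s, X j ω ∂μ = 0 := by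
      simp_rw [mul_sum]
      rw [integral_finsetSum s fun j _ => hcross j]
      exact sum_eq_zero fun j hj => horth (ne_of_mem_of_not_mem hj hi).symm
    simp_rw [sum_insert hi]
    rw [integral_norm_add_sq_of_integral_conj_mul_eq_zero (hX i)
      (memLp_finsetSum s fun j _ => hX j) hrest, ih]

theorem ProbabilityTheory.IndepFun.integral_conj_mul_eq_zero {X Y : Ω → 𝕜}
    (hXY : IndepFun X Y μ) (hX : AEStronglyMeasurable X μ) (hY : AEStronglyMeasurable Y μ)
    (hY0 : ∫ ω, Y ω ∂μ = 0) :
    ∫ ω, conj (X ω) * Y ω ∂μ = 0 := by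
  have hconj := (hXY.comp RCLike.continuous_conj.measurable measurable_id)
    |>.integral_fun_mul_eq_mul_integral (RCLike.continuous_conj.comp_aestronglyMeasurable hX) hY
  simpa [hY0] using hconj

theorem ProbabilityTheory.iIndepFun.integral_norm_sum_sq {ι : Type*}
    {X : ι → Ω → 𝕜} (hindep : iIndepFun X μ) (hX : ∀ i, MemLp (X i) 2 μ)
    (hX0 : ∀ i, ∫ ω, X i ω ∂μ = 0) (s : Finset ι) :
    ∫ ω, ‖∑ i ∈ s, X i ω‖ ^ 2 ∂μ = ∑ i ∈ s, ∫ ω, ‖X i ω‖ ^ 2 ∂μ :=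
  integral_norm_sum_sq_of_pairwise hX (fun i j hij =>
    (hindep.indepFun hij).integral_conj_mul_eq_zero (hX i).aestronglyMeasurable
      (hX j).aestronglyMeasurable (hX0 j)) s

theorem integral_norm_const_add_sq [IsProbabilityMeasure μ] (a : 𝕜) {Y : Ω → 𝕜}
    (hY : MemLp Y 2 μ) (hY0 : ∫ ω, Y ω ∂μ = 0) :
    ∫ ω, ‖a + Y ω‖ ^ 2 ∂μ = ‖a‖ ^ 2 + ∫ ω, ‖Y ω‖ ^ 2 ∂μ := by
  rw [integral_norm_add_sq_of_integral_conj_mul_eq_zero (memLp_const a) hY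
    (by rw [integral_const_mul, hY0, mul_zero])]
  simp

theorem ProbabilityTheory.iIndepFun.integral_norm_sum_mul_sq {ι : Type*}
    {ν : ι → Ω → 𝕜} (hindep : iIndepFun ν μ) (hL2 : ∀ i, MemLp (ν i) 2 μ)
    (hmean : ∀ i, ∫ ω, ν i ω ∂μ = 0) (hvar : ∀ i, ∫ ω, ‖ν i ω‖ ^ 2 ∂μ = 1)
    (c : ι → 𝕜) (s : Finset ι) :
    ∫ ω, ‖∑ i ∈ s, c i * ν i ω‖ ^ 2 ∂μ = ∑ i ∈ s, ‖c i‖ ^ 2 := by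
  have hscaled : iIndepFun (fun i ω => c i * ν i ω) μ :=
    hindep.comp (fun i x => c i * x) fun i => measurable_const_mul (c i)
  rw [hscaled.integral_norm_sum_sq (fun i => (hL2 i).const_mul (c i))
    (fun i => by simp [integral_const_mul, hmean i])]
  simp_rw [norm_mul, mul_pow, integral_const_mul, hvar, mul_one]

end

theorem integral_norm_sq_rician_los_beamforming {Ω ι : Type*} [MeasurableSpace Ω]
    {μ : Measure Ω} [IsProbabilityMeasure μ] {κ : ℝ} (hκ : 0 ≤ κ)
    (s : Finset ι) (α : ι → ℝ) {φ : ι → ℂ} (hφ : ∀ i, ‖φ i‖ = 1) {ν : ι → Ω → ℂ}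
    (hindep : iIndepFun ν μ) (hL2 : ∀ i, MemLp (ν i) 2 μ)
    (hmean : ∀ i, ∫ ω, ν i ω ∂μ = 0) (hvar : ∀ i, ∫ ω, ‖ν i ω‖ ^ 2 ∂μ = 1) :
    ∫ ω, ‖(Real.sqrt (κ / (1 + κ)) : ℂ) * ∑ i ∈ s, (α i : ℂ) +
        (Real.sqrt (1 / (1 + κ)) : ℂ) * ∑ i ∈ s, (α i : ℂ) * ν i ω * conj (φ i)‖ ^ 2 ∂μ
      = (κ * (∑ i ∈ s, α i) ^ 2 + ∑ i ∈ s, α i ^ 2) / (1 + κ) := by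
  set c : ι → ℂ := fun i => (Real.sqrt (1 / (1 + κ)) : ℂ) * α i * conj (φ i)
  have hscattered : ∀ ω, (Real.sqrt (1 / (1 + κ)) : ℂ) *
      ∑ i ∈ s, (α i : ℂ) * ν i ω * conj (φ i) = ∑ i ∈ s, c i * ν i ω := fun ω => by
    rw [mul_sum]; exact sum_congr rfl fun i _ => by ring
  have hscattered_mean : ∫ ω, ∑ i ∈ s, c i * ν i ω ∂μ = 0 := by
    rw [integral_finsetSum _ fun i _ => ((hL2 i).const_mul (c i)).integrable one_le_two]
    simp [integral_const_mul, hmean]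
  have hκ1 : 0 < 1 + κ := by linarith
  have hc : ∀ i, ‖c i‖ ^ 2 = α i ^ 2 / (1 + κ) := fun i => by
    simp only [c, norm_mul, mul_pow, Complex.norm_real, Real.norm_eq_abs, sq_abs,
      RCLike.norm_conj, hφ i, Real.sq_sqrt (div_pos one_pos hκ1).le]
    ring
  have hY : MemLp (fun ω => ∑ i ∈ s, c i * ν i ω) 2 μ :=
    memLp_finsetSum s fun i _ => (hL2 i).const_mul (c i)
  simp_rw [hscattered]
  rw [integral_norm_const_add_sq _ hY hscattered_mean,
    hindep.integral_norm_sum_mul_sq hL2 hmean hvar]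
  simp only [norm_mul, mul_pow, ← Complex.ofReal_sum, Complex.norm_real, Real.norm_eq_abs,
    sq_abs, Real.sq_sqrt (div_nonneg hκ hκ1.le), hc, ← sum_div]
  ring

theorem mean_beamforming_gain_general
    {Ω : Type*} [MeasurableSpace Ω] (μ : Measure Ω) [IsProbabilityMeasure μ]
    (L MAP : ℕ) (hMAP : 1 ≤ MAP) (M : ℕ) (hM : M = L * MAP)
    (η q αbot κ : ℝ) (hη : 0 < η) (hκ : 0 < κ)
    (α : ℕ → ℝ)
    (hα : ∀ m : ℕ, α m = αbot * (1 + ((m / MAP : ℕ) : ℝ) ^ 2 * η) ^ (-(q / 2)))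
    (φ : ℕ → ℂ) (hφ : ∀ m, ‖φ m‖ = 1)
    (ν : ℕ → Ω → ℂ)
    (hindep : iIndepFun ν μ)
    (hL2 : ∀ m, MemLp (ν m) 2 μ)
    (hmean : ∀ m, ∫ ω, ν m ω ∂μ = 0)
    (hvar : ∀ m, ∫ ω, ‖ν m ω‖ ^ 2 ∂μ = 1) :
    ∫ ω, (1 / (M : ℝ)) *
        ‖(Real.sqrt (κ / (1 + κ)) : ℂ) * ∑ m ∈ Finset.range M, (α m : ℂ) +
          (Real.sqrt (1 / (1 + κ)) : ℂ) *
            ∑ m ∈ Finset.range M, (α m : ℂ) * ν m ω * (starRingEnd ℂ) (φ m)‖ ^ 2 ∂μ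
      = (αbot ^ 2 / (1 + κ)) *
          (κ * MAP *
            ((∑ l ∈ Finset.range L, (1 + (l : ℝ) ^ 2 * η) ^ (-(q / 2))) / Real.sqrt L) ^ 2
          + (1 / (L : ℝ)) * ∑ l ∈ Finset.range L, (1 + (l : ℝ) ^ 2 * η) ^ (-q)) := by
  set G1 := ∑ l ∈ range L, (1 + (l : ℝ) ^ 2 * η) ^ (-(q / 2))
  set G2 := ∑ l ∈ range L, (1 + (l : ℝ) ^ 2 * η) ^ (-q)
  have hsq : ∀ l : ℕ, ((1 + (l : ℝ) ^ 2 * η) ^ (-(q / 2))) ^ 2 = (1 + (l : ℝ) ^ 2 * η) ^ (-q) :=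
    fun l => by rw [← Real.rpow_natCast, ← Real.rpow_mul (by positivity)]; ring_nf
  have hsum : ∑ m ∈ range M, α m = MAP * (αbot * G1) := by
    simp_rw [hα, hM, sum_range_mul_div (fun l => αbot * (1 + (l : ℝ) ^ 2 * η) ^ (-(q / 2))),
      nsmul_eq_mul, ← mul_sum, G1]
  have hsum_sq : ∑ m ∈ range M, α m ^ 2 = MAP * (αbot ^ 2 * G2) := by
    simp_rw [hα, mul_pow, hsq, hM,
      sum_range_mul_div (fun l => αbot ^ 2 * (1 + (l : ℝ) ^ 2 * η) ^ (-q)), nsmul_eq_mul,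
      ← mul_sum, G2]
  have hMAP0 : (MAP : ℝ) ≠ 0 := by positivity
  rw [integral_const_mul, integral_norm_sq_rician_los_beamforming hκ.le _ α hφ hindep hL2 hmean
    hvar, hsum, hsum_sq, div_pow, Real.sq_sqrt (Nat.cast_nonneg L), hM, Nat.cast_mul]
  field_simp

/-- The average-beamforming-gain formula of eq. (16) of the paper: for the
spatially non-stationary Rician channel with per-AP-constant attenuation
`α_m = α_⊥(1 + ⌊m/M_AP⌋²η)^{-q/2}`, Rician K-factor `κ`, unit-modulus LoS
phases `φ_m`, independent zero-mean unit-variance fading `ν_m`, and LoS-based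
beamforming, the mean of the instantaneous beamforming gain
`β̄ = (1/M)|√(κ/(1+κ))·Σ α_m + √(1/(1+κ))·Σ α_m ν_m conj(φ_m)|²` equals
`(α_⊥²/(1+κ))·(κ·M_AP·G(L)² + Γ(L))`. -/
theorem mean_beamforming_gain
    {Ω : Type*} [MeasurableSpace Ω] (μ : Measure Ω) [IsProbabilityMeasure μ]
    (L MAP : ℕ) (hL : 1 ≤ L) (hMAP : 1 ≤ MAP) (M : ℕ) (hM : M = L * MAP)
    (η q αbot κ : ℝ) (hη : 0 < η) (hq : 0 < q) (hαbot : 0 < αbot) (hκ : 0 < κ)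
    (α : ℕ → ℝ)
    (hα : ∀ m : ℕ, α m = αbot * (1 + ((m / MAP : ℕ) : ℝ) ^ 2 * η) ^ (-(q / 2)))
    (φ : ℕ → ℂ) (hφ : ∀ m, ‖φ m‖ = 1)
    (ν : ℕ → Ω → ℂ)
    (hmeas : ∀ m, Measurable (ν m))
    (hindep : iIndepFun ν μ)
    (hL2 : ∀ m, MemLp (ν m) 2 μ)
    (hmean : ∀ m, ∫ ω, ν m ω ∂μ = 0)
    (hvar : ∀ m, ∫ ω, ‖ν m ω‖ ^ 2 ∂μ = 1) :
    ∫ ω, (1 / (M : ℝ)) *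
        ‖(Real.sqrt (κ / (1 + κ)) : ℂ) * ∑ m ∈ Finset.range M, (α m : ℂ) +
          (Real.sqrt (1 / (1 + κ)) : ℂ) *
            ∑ m ∈ Finset.range M, (α m : ℂ) * ν m ω * (starRingEnd ℂ) (φ m)‖ ^ 2 ∂μ
      = (αbot ^ 2 / (1 + κ)) *
          (κ * MAP *
            ((∑ l ∈ Finset.range L, (1 + (l : ℝ) ^ 2 * η) ^ (-(q / 2))) / Real.sqrt L) ^ 2
          + (1 / (L : ℝ)) * ∑ l ∈ Finset.range L, (1 + (l : ℝ) ^ 2 * η) ^ (-q)) :=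
  mean_beamforming_gain_general μ L MAP hMAP M hM η q αbot κ hη hκ α hα φ hφ ν hindep hL2 hmean hvar
end
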